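/- arXiv:2404.00195 — 9 statements merged into one kernel-verified Lean document; each statement's English description precedes it below -/
import Mathlib

section
/- Let X be a nonempty finite set, K ≥ 1, and let d^1, …, d^K : X → ℝ satisfy d^k(x) > 0 for all k and x. Let Δ_K = {α ∈ ℝ^K : α_k ≥ 0 for all k, Σ_k α_k = 1} be the probability simplex, and for α ∈ Δ_K write μ_α = Σ_k α_k d^k. Let α* ∈ Δ_K be a minimizer of α ↦ max_{k∈[K]} Σ_{x∈X} d^k(x)²/μ_α(x), and set μ* = μ_{α*}. Suppose d̂^1, …, d̂^K : X → ℝ satisfy |d̂^k(x) − d^k(x)| ≤ d^k(x)/4 for all k and x; write μ̂_α = Σ_k α_k d̂^k, let α̂ ∈ Δ_K be a minimizer of α ↦ max_{k∈[K]} Σ_{x∈X} d̂^k(x)²/μ̂_α(x), and set μ̃* = μ_{α̂} = Σ_k α̂_k d^k. Then max_{k∈[K]} Σ_{x∈X} d^k(x)²/μ̃*(x) ≤ (125/27) · max_{k∈[K]} Σ_{x∈X} d^k(x)²/μ*(x). -/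
open Finset

/-- Approximate optimality of the sampling distribution computed from coarse estimators:
if `α*` minimizes the maximal visitation ratio for the true distributions `d^k`, `α̂` minimizes
it for coarse estimators `d̂^k` with `|d̂^k(x) − d^k(x)| ≤ d^k(x)/4`, and `μ̃* = Σ_k α̂_k d^k`,
then the value of `μ̃*` is within a factor `125/27` of the optimum. -/
theorem stmt_3 (X : Type) [Fintype X] [Nonempty X] (K : ℕ) (hK : 1 ≤ K)
    (d dhat : Fin K → X → ℝ)
    (hd : ∀ k x, 0 < d k x)
    (hdhat : ∀ k x, |dhat k x - d k x| ≤ d k x / 4)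
    (αstar αhat : Fin K → ℝ)
    (hαstar : αstar ∈ stdSimplex ℝ (Fin K))
    (hαhat : αhat ∈ stdSimplex ℝ (Fin K))
    (hmin : ∀ α ∈ stdSimplex ℝ (Fin K),
      (⨆ k : Fin K, ∑ x, (d k x) ^ 2 / (∑ j, αstar j * d j x)) ≤
        ⨆ k : Fin K, ∑ x, (d k x) ^ 2 / (∑ j, α j * d j x))
    (hminhat : ∀ α ∈ stdSimplex ℝ (Fin K),
      (⨆ k : Fin K, ∑ x, (dhat k x) ^ 2 / (∑ j, αhat j * dhat j x)) ≤
        ⨆ k : Fin K, ∑ x, (dhat k x) ^ 2 / (∑ j, α j * dhat j x)) :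
    (⨆ k : Fin K, ∑ x, (d k x) ^ 2 / (∑ j, αhat j * d j x)) ≤
      (125 / 27) * ⨆ k : Fin K, ∑ x, (d k x) ^ 2 / (∑ j, αstar j * d j x) := by
  haveI : Nonempty (Fin K) := ⟨⟨0, hK⟩⟩
  have hlb : ∀ k x, 3 / 4 * d k x ≤ dhat k x := by
    intro k x
    have h := abs_le.mp (hdhat k x)
    linarith [h.1]
  have hub : ∀ k x, dhat k x ≤ 5 / 4 * d k x := by
    intro k x
    have h := abs_le.mp (hdhat k x)
    linarith [h.2]
  have hdhatpos : ∀ k x, 0 < dhat k x := fun k x =>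
    lt_of_lt_of_le (by linarith [hd k x]) (hlb k x)
  -- positivity of mixtures
  have hpos : ∀ (e : Fin K → X → ℝ), (∀ k x, 0 < e k x) →
      ∀ α ∈ stdSimplex ℝ (Fin K), ∀ x : X, 0 < ∑ j, α j * e j x := by
    intro e he α hα x
    obtain ⟨j, hj⟩ : ∃ j, 0 < α j := by
      by_contra h
      push_neg at h
      have hz : ∑ j, α j = 0 :=
        Finset.sum_eq_zero fun j _ => le_antisymm (h j) (hα.1 j)
      rw [hα.2] at hz; norm_num at hz
    exact Finset.sum_pos' (fun i _ => mul_nonneg (hα.1 i) (he i x).le)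
      ⟨j, Finset.mem_univ j, mul_pos hj (he j x)⟩
  -- mixture comparison
  have hmixub : ∀ α ∈ stdSimplex ℝ (Fin K), ∀ x : X,
      (∑ j, α j * dhat j x) ≤ 5 / 4 * ∑ j, α j * d j x := by
    intro α hα x
    rw [Finset.mul_sum]
    refine Finset.sum_le_sum fun j _ => ?_
    have := mul_le_mul_of_nonneg_left (hub j x) (hα.1 j)
    linarith
  have hmixlb : ∀ α ∈ stdSimplex ℝ (Fin K), ∀ x : X,
      (∑ j, α j * d j x) ≤ 4 / 3 * ∑ j, α j * dhat j x := by
    intro α hα x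
    rw [Finset.mul_sum]
    refine Finset.sum_le_sum fun j _ => ?_
    have := mul_le_mul_of_nonneg_left (hlb j x) (hα.1 j)
    nlinarith
  -- step 1 : true value ≤ (20/9) * estimated value  (same α)
  have step1 : ∀ α ∈ stdSimplex ℝ (Fin K), ∀ k : Fin K,
      (∑ x, (d k x) ^ 2 / (∑ j, α j * d j x)) ≤
        20 / 9 * ∑ x, (dhat k x) ^ 2 / (∑ j, α j * dhat j x) := by
    intro α hα k
    rw [Finset.mul_sum]
    refine Finset.sum_le_sum fun x _ => ?_
    have hμ := hpos d hd α hα x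
    have hμh := hpos dhat hdhatpos α hα x
    rw [mul_div_assoc', div_le_div_iff₀ hμ hμh]
    have h1 := hlb k x
    have h2 := hmixub α hα x
    have hdk := (hd k x)
    nlinarith [mul_le_mul_of_nonneg_left h2 (sq_nonneg (d k x)),
      mul_le_mul_of_nonneg_right (mul_self_le_mul_self (by linarith) h1) hμ.le]
  -- step 3 : estimated value ≤ (25/12) * true value  (same α)
  have step3 : ∀ α ∈ stdSimplex ℝ (Fin K), ∀ k : Fin K,
      (∑ x, (dhat k x) ^ 2 / (∑ j, α j * dhat j x)) ≤
        25 / 12 * ∑ x, (d k x) ^ 2 / (∑ j, α j * d j x) := by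
    intro α hα k
    rw [Finset.mul_sum]
    refine Finset.sum_le_sum fun x _ => ?_
    have hμ := hpos d hd α hα x
    have hμh := hpos dhat hdhatpos α hα x
    rw [mul_div_assoc', div_le_div_iff₀ hμh hμ]
    have h1 := hub k x
    have h2 := hmixlb α hα x
    have hdk := (hd k x)
    have hdhk := (hdhatpos k x)
    nlinarith [mul_le_mul_of_nonneg_left h2 (sq_nonneg (dhat k x)),
      mul_le_mul_of_nonneg_right (mul_self_le_mul_self hdhk.le h1) hμh.le]
  -- bddAbove facts
  have bdd : ∀ f : Fin K → ℝ, BddAbove (Set.range f) := fun f =>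
    Set.Finite.bddAbove (Set.finite_range f)
  have main : (⨆ k : Fin K, ∑ x, (d k x) ^ 2 / (∑ j, αhat j * d j x)) ≤
      20 / 9 * ⨆ k : Fin K, ∑ x, (dhat k x) ^ 2 / (∑ j, αhat j * dhat j x) := by
    refine ciSup_le fun k => ?_
    refine (step1 αhat hαhat k).trans ?_
    have := le_ciSup (bdd fun k => ∑ x, (dhat k x) ^ 2 / (∑ j, αhat j * dhat j x)) k
    nlinarith
  have mid := hminhat αstar hαstar
  have last : (⨆ k : Fin K, ∑ x, (dhat k x) ^ 2 / (∑ j, αstar j * dhat j x)) ≤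
      25 / 12 * ⨆ k : Fin K, ∑ x, (d k x) ^ 2 / (∑ j, αstar j * d j x) := by
    refine ciSup_le fun k => ?_
    refine (step3 αstar hαstar k).trans ?_
    have := le_ciSup (bdd fun k => ∑ x, (d k x) ^ 2 / (∑ j, αstar j * d j x)) k
    nlinarith
  nlinarith [main, mid, last]
end

section
/- Let S and A be nonempty finite sets, let P : S × A → S → ℝ satisfy P(s | s′, a′) ≥ 0 and Σ_{s∈S} P(s | s′, a′) = 1 for all (s′, a′), and let π : S → A → ℝ satisfy π(a | s) ≥ 0 and Σ_{a∈A} π(a | s) = 1 for all s. Let d_{h−1}, d_h : S × A → ℝ satisfy the flow equation d_h(s, a) = Σ_{(s′,a′)∈S×A} d_{h−1}(s′, a′)·P(s | s′, a′)·π(a | s) for all (s, a). Let μ̃_{h−1}, μ̂_{h−1}, μ̃_h, μ̂_h : S × A → ℝ be positive functions and let ŵ_{h−1}, ŵ_h : S × A → ℝ. Suppose (i) Σ_{(s,a)} |μ̃_{h−1}(s,a)·ŵ_{h−1}(s,a)/μ̂_{h−1}(s,a) − d_{h−1}(s,a)| ≤ ε, and (ii) Σ_{(s,a)} |μ̃_h(s,a)·ŵ_h(s,a)/μ̂_h(s,a)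 − Σ_{(s′,a′)} μ̃_{h−1}(s′,a′)·P(s | s′,a′)·π(a | s)·ŵ_{h−1}(s′,a′)/μ̂_{h−1}(s′,a′)| ≤ ε. Then Σ_{(s,a)} |μ̃_h(s,a)·ŵ_h(s,a)/μ̂_h(s,a) − d_h(s,a)| ≤ 2ε. -/
open Finset

/-- Error propagation for the step-wise importance-density estimation (Lemma on error
propagation): if the step-(h−1) density estimate has ℓ₁-error at most `ε` and the gradient
of the step-h loss at `ŵ_h` has ℓ₁-norm at most `ε`, then the step-h density estimate has
ℓ₁-error at most `2ε`. -/
theorem stmt_4 (S A : Type) [Fintype S] [Fintype A] [Nonempty S] [Nonempty A]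
    (P : S × A → S → ℝ) (hP0 : ∀ sa s, 0 ≤ P sa s) (hP1 : ∀ sa, ∑ s, P sa s = 1)
    (π : S → A → ℝ) (hπ0 : ∀ s a, 0 ≤ π s a) (hπ1 : ∀ s, ∑ a, π s a = 1)
    (dprev dcur : S × A → ℝ)
    (hflow : ∀ sa : S × A, dcur sa = ∑ sa' : S × A, dprev sa' * P sa' sa.1 * π sa.1 sa.2)
    (μtprev μhprev μtcur μhcur : S × A → ℝ)
    (hμtprev : ∀ sa, 0 < μtprev sa) (hμhprev : ∀ sa, 0 < μhprev sa)
    (hμtcur : ∀ sa, 0 < μtcur sa) (hμhcur : ∀ sa, 0 < μhcur sa)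
    (wprev wcur : S × A → ℝ) (ε : ℝ)
    (h1 : ∑ sa : S × A, |μtprev sa * wprev sa / μhprev sa - dprev sa| ≤ ε)
    (h2 : ∑ sa : S × A, |μtcur sa * wcur sa / μhcur sa -
        ∑ sa' : S × A, μtprev sa' * P sa' sa.1 * π sa.1 sa.2 * wprev sa' / μhprev sa'| ≤ ε) :
    ∑ sa : S × A, |μtcur sa * wcur sa / μhcur sa - dcur sa| ≤ 2 * ε := by
  set g : S × A → ℝ := fun sa' => μtprev sa' * wprev sa' / μhprev sa' with hg
  have hPπ : ∀ sa' : S × A, ∑ sa : S × A, P sa' sa.1 * π sa.1 sa.2 = 1 := by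
    intro sa'
    rw [Fintype.sum_prod_type]
    simp only [← Finset.mul_sum, hπ1, mul_one, hP1]
  have key : ∑ sa : S × A, |(∑ sa' : S × A, g sa' * P sa' sa.1 * π sa.1 sa.2) - dcur sa| ≤ ε := by
    calc ∑ sa : S × A, |(∑ sa' : S × A, g sa' * P sa' sa.1 * π sa.1 sa.2) - dcur sa|
        ≤ ∑ sa : S × A, ∑ sa' : S × A, |g sa' - dprev sa'| * (P sa' sa.1 * π sa.1 sa.2) := by
          apply Finset.sum_le_sum; intro sa _
          rw [hflow sa, ← Finset.sum_sub_distrib]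
          refine (Finset.abs_sum_le_sum_abs _ _).trans ?_
          apply Finset.sum_le_sum; intro sa' _
          rw [← sub_mul, ← sub_mul, abs_mul, abs_mul, mul_assoc,
            abs_of_nonneg (hP0 sa' sa.1), abs_of_nonneg (hπ0 sa.1 sa.2)]
      _ = ∑ sa' : S × A, |g sa' - dprev sa'| * ∑ sa : S × A, P sa' sa.1 * π sa.1 sa.2 := by
          rw [Finset.sum_comm]; simp [Finset.mul_sum]
      _ = ∑ sa' : S × A, |g sa' - dprev sa'| := by simp [hPπ]
      _ ≤ ε := h1
  calc ∑ sa : S × A, |μtcur sa * wcur sa / μhcur sa - dcur sa|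
      ≤ ∑ sa : S × A, (|μtcur sa * wcur sa / μhcur sa -
          ∑ sa' : S × A, g sa' * P sa' sa.1 * π sa.1 sa.2|
        + |(∑ sa' : S × A, g sa' * P sa' sa.1 * π sa.1 sa.2) - dcur sa|) := by
        apply Finset.sum_le_sum; intro sa _; exact abs_sub_le _ _ _
    _ = (∑ sa : S × A, |μtcur sa * wcur sa / μhcur sa -
          ∑ sa' : S × A, g sa' * P sa' sa.1 * π sa.1 sa.2|)
        + ∑ sa : S × A, |(∑ sa' : S × A, g sa' * P sa' sa.1 * π sa.1 sa.2) - dcur sa| :=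
        Finset.sum_add_distrib
    _ ≤ ε + ε := by
        refine add_le_add ?_ key
        refine le_trans (le_of_eq ?_) h2
        apply Finset.sum_congr rfl; intro sa _
        rw [show (∑ sa' : S × A, g sa' * P sa' sa.1 * π sa.1 sa.2)
            = ∑ sa' : S × A, μtprev sa' * P sa' sa.1 * π sa.1 sa.2 * wprev sa' / μhprev sa'
          from Finset.sum_congr rfl fun sa' _ => by simp only [hg]; ring]
    _ = 2 * ε := by ring
end

section
/- Let x ∈ ℝ, ε > 0, δ ∈ (0,1), and let N be a natural number with N ≥ 8·log(1/δ). Let X̂_1, …, X̂_N be i.i.d. integrable real-valued random variables on a probability space with E[|X̂_1 − x|] ≤ ε/4. Then with probability at least 1 − δ, every real number m that is a median of the sample — i.e., every m such that #{i : X̂_i ≤ m} ≥ N/2 and #{i : X̂_i ≥ m} ≥ N/2 — satisfies |m − x| ≤ ε. -/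
/-!
By Markov's inequality each sample lands farther than `ε` from `x` with probability at most `1/4`.
If a median `m` has `|m - x| > ε`, then the at least `N/2` samples on the far side of `m` are all
farther than `ε` from `x`. Hoeffding's inequality for the indicators of far samples, whose means
are at most `1/4`, bounds the probability that `N/2` of them fire by
`exp (-2 N (1/4)^2) = exp (-N/8) ≤ δ`.
-/

open MeasureTheory ProbabilityTheory Real Finset

section Probability

variable {Ω : Type*} [MeasurableSpace Ω] {P : Measure Ω}

theorem ofReal_one_sub_le_measure_of_measure_compl_le [IsProbabilityMeasure P] {s : Set Ω}
    {δ : ℝ} (hδ : 0 ≤ δ) (h : P sᶜ ≤ ENNReal.ofReal δ) : ENNReal.ofReal (1 - δ) ≤ P s := by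
  rw [ENNReal.ofReal_sub _ hδ, ENNReal.ofReal_one, tsub_le_iff_right, ← measure_univ (μ := P)]
  exact (measure_univ_le_add_compl s).trans (add_le_add_right h _)

theorem measureReal_lt_abs_sub_le_integral_div [IsFiniteMeasure P] {X : Ω → ℝ}
    (hX : Integrable X P) (x : ℝ) {ε : ℝ} (hε : 0 < ε) :
    P.real {ω | ε < |X ω - x|} ≤ (∫ ω, |X ω - x| ∂P) / ε := by
  have hmarkov := mul_meas_ge_le_integral_of_nonneg (ae_of_all P fun ω => abs_nonneg (X ω - x))
    (hX.sub (integrable_const x)).abs ε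
  have hmono : P.real {ω | ε < |X ω - x|} ≤ P.real {ω | ε ≤ |X ω - x|} :=
    measureReal_mono fun ω (h : ε < |X ω - x|) => h.le
  rw [le_div_iff₀' hε]
  exact (mul_le_mul_of_nonneg_left hmono hε.le).trans hmarkov

theorem measureReal_sum_range_ge_le_of_mem_Icc [IsProbabilityMeasure P]
    {Z : ℕ → Ω → ℝ} (hindep : iIndepFun Z P) (hmeas : ∀ i, Measurable (Z i))
    (hZ : ∀ i ω, Z i ω ∈ Set.Icc (0 : ℝ) 1) {p s : ℝ} (hp : ∀ i, P[Z i] ≤ p) (hs : 0 ≤ s)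
    (N : ℕ) :
    P.real {ω | N * (p + s) ≤ ∑ i ∈ range N, Z i ω} ≤ exp (-2 * N * s ^ 2) := by
  set Y : ℕ → Ω → ℝ := fun i ω => Z i ω - P[Z i]
  have hYindep : iIndepFun Y P := by
    have := hindep.comp (fun (i : ℕ) (z : ℝ) => z - P[Z i]) fun _ => measurable_id.sub_const _
    exact this
  have hYsubG : ∀ i < N, HasSubgaussianMGF (Y i) ((‖(1 : ℝ) - 0‖₊ / 2) ^ 2) P := fun i _ =>
    hasSubgaussianMGF_of_mem_Icc (hmeas i).aemeasurable (ae_of_all _ (hZ i))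
  have hsub : {ω | N * (p + s) ≤ ∑ i ∈ range N, Z i ω} ⊆
      {ω | N * s ≤ ∑ i ∈ range N, Y i ω} := by
    intro ω hω
    have : ∑ i ∈ range N, P[Z i] ≤ N * p := by
      simpa using sum_le_sum fun i (_ : i ∈ range N) => hp i
    simp only [Y, sum_sub_distrib, Set.mem_ofPred_eq] at hω ⊢
    linarith
  calc P.real _ ≤ P.real {ω | N * s ≤ ∑ i ∈ range N, Y i ω} := measureReal_mono hsub
    _ ≤ exp (-(N * s) ^ 2 / (2 * N * ((‖(1 : ℝ) - 0‖₊ / 2) ^ 2 : NNReal))) :=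
      HasSubgaussianMGF.measure_sum_range_ge_le_of_iIndepFun hYindep hYsubG (by positivity)
    _ = exp (-2 * N * s ^ 2) := by
      rcases N.eq_zero_or_pos with rfl | _
      · simp
      · congr 1
        push_cast
        field_simp
        norm_num

end Probability

theorem le_card_filter_lt_abs_sub_of_median {ι : Type*} (s : Finset ι) (y : ι → ℝ)
    {a m x ε : ℝ} (hle : a ≤ #(s.filter (y · ≤ m))) (hge : a ≤ #(s.filter (m ≤ y ·)))
    (hfar : ε < |m - x|) : a ≤ #(s.filter (ε < |y · - x|)) := by
  rcases lt_abs.mp hfar with h | h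
  · refine hge.trans (Nat.cast_le.mpr (card_le_card fun i hi => ?_))
    simp only [mem_filter] at hi ⊢
    exact ⟨hi.1, h.trans_le ((sub_le_sub_right hi.2 x).trans (le_abs_self _))⟩
  · refine hle.trans (Nat.cast_le.mpr (card_le_card fun i hi => ?_))
    simp only [mem_filter] at hi ⊢
    exact ⟨hi.1, h.trans_le ((by linarith [hi.2] : -(m - x) ≤ -(y i - x)).trans (neg_le_abs _))⟩

theorem stmt_5_general (x ε δ : ℝ) (hε : 0 < ε) (hδ0 : 0 < δ)
    (N : ℕ) (hN : 8 * Real.log (1 / δ) ≤ (N : ℝ))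
    (Ω : Type) [MeasurableSpace Ω] (P : Measure Ω) [IsProbabilityMeasure P]
    (Xh : ℕ → Ω → ℝ)
    (hmeas : ∀ i, Measurable (Xh i))
    (hint : ∀ i, Integrable (Xh i) P)
    (hindep : iIndepFun Xh P)
    (hident : ∀ i, Measure.map (Xh i) P = Measure.map (Xh 0) P)
    (hmean : ∫ ω, |Xh 0 ω - x| ∂P ≤ ε / 4) :
    ENNReal.ofReal (1 - δ) ≤
      P {ω | ∀ m : ℝ,
        (N : ℝ) / 2 ≤ (((Finset.range N).filter fun i => Xh i ω ≤ m).card : ℝ) →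
        (N : ℝ) / 2 ≤ (((Finset.range N).filter fun i => m ≤ Xh i ω).card : ℝ) →
        |m - x| ≤ ε} := by
  set far : Set ℝ := {y | ε < |y - x|}
  have hfar : MeasurableSet far := measurableSet_lt measurable_const (by fun_prop)
  have hind : Measurable (far.indicator (1 : ℝ → ℝ)) := measurable_const.indicator hfar
  set Z : ℕ → Ω → ℝ := fun i ω => far.indicator 1 (Xh i ω)
  have hZ : ∀ i ω, Z i ω ∈ Set.Icc (0 : ℝ) 1 := fun i ω => by
    by_cases h : Xh i ω ∈ far <;> simp [Z, h]
  have hZmean : ∀ i, P[Z i] ≤ 1 / 4 := fun i => calc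
    P[Z i] = ∫ y, far.indicator 1 y ∂(P.map (Xh 0)) := by
      rw [← hident i, integral_map (hmeas i).aemeasurable hind.aestronglyMeasurable]
    _ = P.real {ω | ε < |Xh 0 ω - x|} := by
      rw [integral_indicator_one hfar, map_measureReal_apply (hmeas 0) hfar]; rfl
    _ ≤ (∫ ω, |Xh 0 ω - x| ∂P) / ε := measureReal_lt_abs_sub_le_integral_div (hint 0) x hε
    _ ≤ 1 / 4 := by rw [div_le_iff₀ hε]; linarith
  have htail := measureReal_sum_range_ge_le_of_mem_Icc
    (hindep.comp (fun _ => far.indicator 1) fun _ => hind) (fun i => hind.comp (hmeas i)) hZ hZmean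
    (s := 1 / 4) (by norm_num) N
  have hδ : exp (-2 * N * (1 / 4 : ℝ) ^ 2) ≤ δ := by
    rw [one_div, log_inv] at hN
    calc exp (-2 * N * (1 / 4 : ℝ) ^ 2) ≤ exp (log δ) := exp_le_exp.mpr (by linarith)
      _ = δ := exp_log hδ0
  apply ofReal_one_sub_le_measure_of_measure_compl_le hδ0.le
  refine (measure_mono (t := {ω | N * (1 / 4 + 1 / 4 : ℝ) ≤ ∑ i ∈ range N, Z i ω})
    fun ω hω => ?_).trans ?_
  · simp only [Set.mem_compl_iff, Set.mem_ofPred_eq, not_forall, not_le] at hω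
    obtain ⟨m, hle, hge, hm⟩ := hω
    have hsum : ∑ i ∈ range N, Z i ω = #((range N).filter fun i => ε < |Xh i ω - x|) := by
      simp only [Z, Set.indicator_apply, natCast_card_filter]; rfl
    rw [Set.mem_ofPred_eq, hsum]
    linarith [le_card_filter_lt_abs_sub_of_median (range N) (Xh · ω) hle hge hm]
  · rw [← ofReal_measureReal]
    exact ENNReal.ofReal_le_ofReal (htail.trans hδ)

/-- Median-of-Means: if `X̂ 0, …, X̂ (N-1)` are i.i.d. integrable random variables with
`E[|X̂ 0 − x|] ≤ ε/4` and `N ≥ 8·log(1/δ)`, then with probability at least `1 − δ`, every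
median `m` of the sample (i.e. at least `N/2` of the values are `≤ m` and at least `N/2`
are `≥ m`) satisfies `|m − x| ≤ ε`. -/
theorem stmt_5 (x ε δ : ℝ) (hε : 0 < ε) (hδ0 : 0 < δ) (hδ1 : δ < 1)
    (N : ℕ) (hN : 8 * Real.log (1 / δ) ≤ (N : ℝ))
    (Ω : Type) [MeasurableSpace Ω] (P : Measure Ω) [IsProbabilityMeasure P]
    (Xh : ℕ → Ω → ℝ)
    (hmeas : ∀ i, Measurable (Xh i))
    (hint : ∀ i, Integrable (Xh i) P)
    (hindep : iIndepFun Xh P)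
    (hident : ∀ i, Measure.map (Xh i) P = Measure.map (Xh 0) P)
    (hmean : ∫ ω, |Xh 0 ω - x| ∂P ≤ ε / 4) :
    ENNReal.ofReal (1 - δ) ≤
      P {ω | ∀ m : ℝ,
        (N : ℝ) / 2 ≤ (((Finset.range N).filter fun i => Xh i ω ≤ m).card : ℝ) →
        (N : ℝ) / 2 ≤ (((Finset.range N).filter fun i => m ≤ Xh i ω).card : ℝ) →
        |m - x| ≤ ε} :=
  stmt_5_general x ε δ hε hδ0 N hN Ω P Xh hmeas hint hindep hident hmean
end

section
/- Let (Ω, F, P) be a probability space with filtration (F_ℓ)_{ℓ≥0}, and let X_1, …, X_T be a martingale difference sequence with respect to (F_ℓ) (i.e., each X_ℓ is F_ℓ-measurable and E[X_ℓ | F_{ℓ−1}] = 0 almost surely) satisfying |X_ℓ| ≤ R almost surely for all ℓ. Then for any δ′ ∈ (0,1) and any η ∈ (0, 1/R), with probability at least 1 − δ′, Σ_{ℓ=1}^T X_ℓ ≤ η·Σ_{ℓ=1}^T E[X_ℓ² | F_{ℓ−1}] + log(1/δ′)/η. -/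
/-!
With `V_ℓ = E_ℓ[X_ℓ²]`, the bound `exp t ≤ 1 + t + t²` for `|t| ≤ 1` and `E_ℓ[X_ℓ] = 0` give
`E_ℓ[exp (η X_ℓ)] ≤ 1 + η² V_ℓ ≤ exp (η² V_ℓ)`. Hence each factor `exp (η X_ℓ - η² V_ℓ)` has
conditional expectation at most `1`, and since `V_ℓ` is `F_{ℓ-1}`-measurable, pulling out the known
factors shows that `exp (η Σ X_ℓ - η² Σ V_ℓ)` has expectation at most `1`. Markov's inequality at
level `1/δ'` is then the claim.
-/

open MeasureTheory ProbabilityTheory Real Finset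

lemma Real.exp_le_one_add_add_sq {t : ℝ} (ht : |t| ≤ 1) : exp t ≤ 1 + t + t ^ 2 := by
  linarith [(abs_le.mp (abs_exp_sub_one_sub_id_le ht)).2]

namespace MeasureTheory

variable {Ω : Type*} {m m0 : MeasurableSpace Ω} {μ : Measure Ω}

lemma integrable_finset_prod_of_bdd [IsFiniteMeasure μ] {ι : Type*} {D : ι → Ω → ℝ} {c : ℝ}
    (hD : ∀ i, AEStronglyMeasurable (D i) μ) (hDc : ∀ i, ∀ᵐ ω ∂μ, ‖D i ω‖ ≤ c) (s : Finset ι) :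
    Integrable (fun ω => ∏ i ∈ s, D i ω) μ := by
  classical
  induction s using Finset.induction_on with
  | empty => simp
  | insert i s hi ih =>
    simp_rw [prod_insert hi]
    exact ih.bdd_mul (hD i) (hDc i)

section BoundedIncrement

variable [IsFiniteMeasure μ] {X : Ω → ℝ} {R η : ℝ}

lemma integrable_exp_mul_of_abs_le (hX : AEStronglyMeasurable X μ) (hXR : ∀ᵐ ω ∂μ, |X ω| ≤ R)
    (η : ℝ) : Integrable (fun ω => exp (η * X ω)) μ := by
  refine .of_bound (continuous_exp.comp_aestronglyMeasurable (hX.const_mul η)) (exp (|η| * R)) ?_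
  filter_upwards [hXR] with ω h
  rw [norm_of_nonneg (exp_pos _).le, exp_le_exp]
  calc η * X ω ≤ |η * X ω| := le_abs_self _
    _ = |η| * |X ω| := abs_mul _ _
    _ ≤ |η| * R := mul_le_mul_of_nonneg_left h (abs_nonneg η)

lemma integrable_sq_of_abs_le (hX : AEStronglyMeasurable X μ) (hXR : ∀ᵐ ω ∂μ, |X ω| ≤ R) :
    Integrable (fun ω => X ω ^ 2) μ := by
  refine .of_bound (hX.pow 2) (R ^ 2) ?_
  filter_upwards [hXR] with ω h
  rw [norm_pow, Real.norm_eq_abs]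
  exact pow_le_pow_left₀ (abs_nonneg _) h 2

lemma condExp_exp_mul_le_exp_mul_condExp_sq (hm : m ≤ m0) (hX : AEStronglyMeasurable X μ)
    (hXR : ∀ᵐ ω ∂μ, |X ω| ≤ R) (hη : 0 ≤ η) (hηR : η * R ≤ 1) (hmean : μ[X|m] =ᵐ[μ] 0) :
    μ[fun ω => exp (η * X ω)|m] ≤ᵐ[μ] fun ω => exp (η ^ 2 * μ[fun ω => X ω ^ 2|m] ω) := by
  have hint : Integrable X μ := .of_bound hX R (by simpa only [Real.norm_eq_abs] using hXR)
  have hX2 := integrable_sq_of_abs_le hX hXR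
  have hquad : (fun ω => exp (η * X ω)) ≤ᵐ[μ] fun ω => 1 + η * X ω + η ^ 2 * X ω ^ 2 := by
    filter_upwards [hXR] with ω h
    have hηX : |η * X ω| ≤ 1 := by
      rw [abs_mul, abs_of_nonneg hη]
      nlinarith [abs_nonneg (X ω)]
    linarith [exp_le_one_add_add_sq hηX, show (η * X ω) ^ 2 = η ^ 2 * X ω ^ 2 by ring]
  have hquad_eq : (fun ω => 1 + η * X ω + η ^ 2 * X ω ^ 2)
      = (fun _ => (1 : ℝ)) + η • X + η ^ 2 • fun ω => X ω ^ 2 := rfl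
  have hquad_int : Integrable (fun ω => 1 + η * X ω + η ^ 2 * X ω ^ 2) μ :=
    ((integrable_const 1).add (hint.const_mul η)).add (hX2.const_mul (η ^ 2))
  have hcondExp_quad : μ[fun ω => 1 + η * X ω + η ^ 2 * X ω ^ 2|m]
      =ᵐ[μ] fun ω => 1 + η ^ 2 * μ[fun ω => X ω ^ 2|m] ω := by
    rw [hquad_eq]
    filter_upwards [condExp_add ((integrable_const 1).add (hint.smul η)) (hX2.smul (η ^ 2)) m,
      condExp_add (integrable_const 1) (hint.smul η) m, condExp_smul η X m,
      condExp_smul (η ^ 2) (fun ω => X ω ^ 2) m, hmean] with ω h₁ h₂ h₃ h₄ h₅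
    simp only [Pi.add_apply, Pi.smul_apply, smul_eq_mul, Pi.zero_apply] at h₁ h₂ h₃ h₄ h₅ ⊢
    rw [h₁, h₂, h₃, h₄, h₅, condExp_const hm]
    ring
  filter_upwards [condExp_mono (m := m) (integrable_exp_mul_of_abs_le hX hXR η) hquad_int hquad,
    hcondExp_quad] with ω h₁ h₂
  rw [h₂] at h₁
  linarith [add_one_le_exp (η ^ 2 * μ[fun ω => X ω ^ 2|m] ω)]

lemma condExp_exp_mul_sub_le_one (hm : m ≤ m0) (hX : AEStronglyMeasurable X μ)
    (hXR : ∀ᵐ ω ∂μ, |X ω| ≤ R) (hη : 0 ≤ η) (hηR : η * R ≤ 1) (hmean : μ[X|m] =ᵐ[μ] 0) :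
    μ[fun ω => exp (η * X ω - η ^ 2 * μ[fun ω => X ω ^ 2|m] ω)|m] ≤ᵐ[μ] 1 := by
  set V := μ[fun ω => X ω ^ 2|m]
  set G : Ω → ℝ := fun ω => exp (-(η ^ 2 * V ω))
  have hsplit : (fun ω => exp (η * X ω - η ^ 2 * V ω)) = G * fun ω => exp (η * X ω) := by
    ext ω
    simp only [G, Pi.mul_apply, ← exp_add]
    ring_nf
  have hGm : StronglyMeasurable[m] G :=
    (stronglyMeasurable_condExp.measurable.const_mul _).neg.exp.stronglyMeasurable
  have hexp := integrable_exp_mul_of_abs_le hX hXR η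
  have hGexp : Integrable (G * fun ω => exp (η * X ω)) μ := by
    refine hexp.bdd_mul (hGm.mono hm).aestronglyMeasurable (c := 1) ?_
    filter_upwards [condExp_nonneg (m := m) (ae_of_all μ fun ω => sq_nonneg (X ω))] with ω hV
    rw [norm_of_nonneg (exp_pos _).le, exp_le_one_iff, neg_nonpos]
    exact mul_nonneg (sq_nonneg η) hV
  rw [hsplit]
  filter_upwards [condExp_mul_of_stronglyMeasurable_left hGm hGexp hexp,
    condExp_exp_mul_le_exp_mul_condExp_sq hm hX hXR hη hηR hmean] with ω h₁ h₂
  rw [h₁, Pi.mul_apply, Pi.one_apply]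
  calc G ω * μ[fun ω => exp (η * X ω)|m] ω ≤ G ω * exp (η ^ 2 * V ω) :=
        mul_le_mul_of_nonneg_left h₂ (exp_pos _).le
    _ = 1 := by rw [← exp_add, neg_add_cancel, exp_zero]

end BoundedIncrement

lemma integral_prod_Icc_le_one [IsProbabilityMeasure μ] (𝓕 : Filtration ℕ m0) {D : ℕ → Ω → ℝ}
    {c : ℝ} (hD : ∀ ℓ, StronglyMeasurable[𝓕 ℓ] (D ℓ)) (hDc : ∀ ℓ, ∀ᵐ ω ∂μ, ‖D ℓ ω‖ ≤ c)
    (hD0 : ∀ ℓ, 0 ≤ D ℓ) (hcond : ∀ n, μ[D (n + 1)|𝓕 n] ≤ᵐ[μ] 1) (n : ℕ) :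
    ∫ ω, ∏ ℓ ∈ Icc 1 n, D ℓ ω ∂μ ≤ 1 := by
  have hDm : ∀ ℓ, AEStronglyMeasurable (D ℓ) μ :=
    fun ℓ => ((hD ℓ).mono (𝓕.le ℓ)).aestronglyMeasurable
  induction n with
  | zero => simp
  | succ n ih =>
    set G : Ω → ℝ := fun ω => ∏ ℓ ∈ Icc 1 n, D ℓ ω
    have hGm : StronglyMeasurable[𝓕 n] G := Finset.stronglyMeasurable_fun_prod _
      fun ℓ hℓ => (hD ℓ).mono (𝓕.mono (mem_Icc.mp hℓ).2)
    have hG : Integrable G μ := integrable_finset_prod_of_bdd hDm hDc _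
    have hGD : Integrable (G * D (n + 1)) μ := hG.mul_bdd (hDm _) (hDc _)
    have hpull : μ[G * D (n + 1)|𝓕 n] ≤ᵐ[μ] G := by
      filter_upwards [condExp_mul_of_stronglyMeasurable_left hGm hGD
        (.of_bound (hDm _) c (hDc _)), hcond n] with ω h₁ h₂
      rw [h₁, Pi.mul_apply]
      exact mul_le_of_le_one_right (prod_nonneg fun ℓ _ => hD0 ℓ ω) h₂
    calc ∫ ω, ∏ ℓ ∈ Icc 1 (n + 1), D ℓ ω ∂μ = ∫ ω, (G * D (n + 1)) ω ∂μ := by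
          simp only [prod_Icc_succ_top (Nat.le_add_left 1 n), G, Pi.mul_apply]
      _ = ∫ ω, μ[G * D (n + 1)|𝓕 n] ω ∂μ := (integral_condExp (𝓕.le n)).symm
      _ ≤ ∫ ω, G ω ∂μ := integral_mono_ae integrable_condExp hG hpull
      _ ≤ 1 := ih

lemma ofReal_one_sub_le_measure_le_log [IsProbabilityMeasure μ] {Y : Ω → ℝ}
    (hY : Integrable (fun ω => exp (Y ω)) μ) (hY1 : ∫ ω, exp (Y ω) ∂μ ≤ 1) {δ : ℝ} (hδ : 0 < δ) :
    ENNReal.ofReal (1 - δ) ≤ μ {ω | Y ω ≤ log (1 / δ)} := by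
  have hmarkov := measure_ge_le_exp_mul_mgf (log (1 / δ)) zero_le_one (by simpa only [one_mul])
  rw [neg_one_mul, exp_neg, exp_log (by positivity), inv_div, div_one, mgf] at hmarkov
  simp only [one_mul] at hmarkov
  have htail : μ {ω | Y ω ≤ log (1 / δ)}ᶜ ≤ ENNReal.ofReal δ := by
    calc μ {ω | Y ω ≤ log (1 / δ)}ᶜ ≤ μ {ω | log (1 / δ) ≤ Y ω} :=
          measure_mono fun ω (hω : ¬Y ω ≤ _) => (not_le.mp hω).le
      _ = ENNReal.ofReal (μ.real {ω | log (1 / δ) ≤ Y ω}) := by rw [ofReal_measureReal]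
      _ ≤ ENNReal.ofReal δ :=
          ENNReal.ofReal_le_ofReal (hmarkov.trans (mul_le_of_le_one_right hδ.le hY1))
  rw [ENNReal.ofReal_sub _ hδ.le, ENNReal.ofReal_one, tsub_le_iff_right, ← measure_univ (μ := μ)]
  exact (measure_univ_le_add_compl _).trans (add_le_add_right htail _)

section MartingaleDifference

variable {𝓕 : Filtration ℕ m0} {X : ℕ → Ω → ℝ} {R η : ℝ}

lemma stronglyMeasurable_exp_mul_sub_condExp_sq (hX : ∀ ℓ, StronglyMeasurable[𝓕 ℓ] (X ℓ))
    (ℓ : ℕ) : StronglyMeasurable[𝓕 ℓ]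
      fun ω => exp (η * X ℓ ω - η ^ 2 * μ[fun ω => X ℓ ω ^ 2|𝓕 (ℓ - 1)] ω) :=
  (((hX ℓ).measurable.const_mul η).sub ((stronglyMeasurable_condExp.mono
    (𝓕.mono (ℓ.sub_le 1))).measurable.const_mul _)).exp.stronglyMeasurable

lemma norm_exp_mul_sub_condExp_sq_le (hXR : ∀ ℓ, ∀ᵐ ω ∂μ, |X ℓ ω| ≤ R) (hη : 0 ≤ η)
    (hηR : η * R ≤ 1) (ℓ : ℕ) :
    ∀ᵐ ω ∂μ, ‖exp (η * X ℓ ω - η ^ 2 * μ[fun ω => X ℓ ω ^ 2|𝓕 (ℓ - 1)] ω)‖ ≤ exp 1 := by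
  filter_upwards [hXR ℓ, condExp_nonneg (m := 𝓕 (ℓ - 1))
    (ae_of_all μ fun ω => sq_nonneg (X ℓ ω))] with ω hX hV
  rw [norm_of_nonneg (exp_pos _).le, exp_le_exp]
  nlinarith [(abs_le.mp hX).2, mul_nonneg (sq_nonneg η) hV]

lemma exp_mul_sum_sub_sum_condExp_sq (T : ℕ) (ω : Ω) :
    exp (η * ∑ ℓ ∈ Icc 1 T, X ℓ ω - η ^ 2 * ∑ ℓ ∈ Icc 1 T, μ[fun ω => X ℓ ω ^ 2|𝓕 (ℓ - 1)] ω)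
      = ∏ ℓ ∈ Icc 1 T, exp (η * X ℓ ω - η ^ 2 * μ[fun ω => X ℓ ω ^ 2|𝓕 (ℓ - 1)] ω) := by
  rw [← exp_sum, sum_sub_distrib, ← mul_sum, ← mul_sum]

theorem integrable_exp_mul_sum_sub_sum_condExp_sq [IsFiniteMeasure μ]
    (hX : ∀ ℓ, StronglyMeasurable[𝓕 ℓ] (X ℓ)) (hXR : ∀ ℓ, ∀ᵐ ω ∂μ, |X ℓ ω| ≤ R) (hη : 0 ≤ η)
    (hηR : η * R ≤ 1) (T : ℕ) :
    Integrable (fun ω => exp (η * ∑ ℓ ∈ Icc 1 T, X ℓ ω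
      - η ^ 2 * ∑ ℓ ∈ Icc 1 T, μ[fun ω => X ℓ ω ^ 2|𝓕 (ℓ - 1)] ω)) μ := by
  simp_rw [exp_mul_sum_sub_sum_condExp_sq]
  exact integrable_finset_prod_of_bdd
    (fun ℓ => ((stronglyMeasurable_exp_mul_sub_condExp_sq hX ℓ).mono (𝓕.le ℓ)).aestronglyMeasurable)
    (norm_exp_mul_sub_condExp_sq_le hXR hη hηR) _

theorem integral_exp_mul_sum_sub_sum_condExp_sq_le_one [IsProbabilityMeasure μ]
    (hX : ∀ ℓ, StronglyMeasurable[𝓕 ℓ] (X ℓ)) (hXR : ∀ ℓ, ∀ᵐ ω ∂μ, |X ℓ ω| ≤ R)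
    (hmean : ∀ ℓ, 1 ≤ ℓ → μ[X ℓ|𝓕 (ℓ - 1)] =ᵐ[μ] 0) (hη : 0 ≤ η) (hηR : η * R ≤ 1) (T : ℕ) :
    ∫ ω, exp (η * ∑ ℓ ∈ Icc 1 T, X ℓ ω
      - η ^ 2 * ∑ ℓ ∈ Icc 1 T, μ[fun ω => X ℓ ω ^ 2|𝓕 (ℓ - 1)] ω) ∂μ ≤ 1 := by
  simp_rw [exp_mul_sum_sub_sum_condExp_sq]
  refine integral_prod_Icc_le_one 𝓕 (stronglyMeasurable_exp_mul_sub_condExp_sq hX)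
    (norm_exp_mul_sub_condExp_sq_le hXR hη hηR) (fun ℓ ω => (exp_pos _).le) (fun n => ?_) T
  simpa only [Nat.add_sub_cancel] using condExp_exp_mul_sub_le_one (𝓕.le n)
    ((hX _).mono (𝓕.le _)).aestronglyMeasurable (hXR _) hη hηR
    (by simpa using hmean (n + 1) (Nat.le_add_left 1 n))

end MartingaleDifference

end MeasureTheory

theorem stmt_6_general (Ω : Type) [m0 : MeasurableSpace Ω] (P : Measure Ω) [IsProbabilityMeasure P]
    (𝓕 : Filtration ℕ m0) (T : ℕ) (R : ℝ) (X : ℕ → Ω → ℝ)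
    (hadapted : ∀ ℓ, StronglyMeasurable[𝓕 ℓ] (X ℓ))
    (hmds : ∀ ℓ, 1 ≤ ℓ → P[X ℓ | 𝓕 (ℓ - 1)] =ᵐ[P] 0)
    (hbdd : ∀ ℓ, ∀ᵐ ω ∂P, |X ℓ ω| ≤ R)
    (δ' η : ℝ) (hδ0 : 0 < δ') (hη0 : 0 < η) (hη1 : η < 1 / R) :
    ENNReal.ofReal (1 - δ') ≤
      P {ω | ∑ ℓ ∈ Finset.Icc 1 T, X ℓ ω ≤
        η * ∑ ℓ ∈ Finset.Icc 1 T, (P[fun ω' => (X ℓ ω') ^ 2 | 𝓕 (ℓ - 1)]) ω +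
          Real.log (1 / δ') / η} := by
  have hηR : η * R ≤ 1 := ((lt_div_iff₀ (one_div_pos.mp (hη0.trans hη1))).mp hη1).le
  refine (ofReal_one_sub_le_measure_le_log
    (integrable_exp_mul_sum_sub_sum_condExp_sq hadapted hbdd hη0.le hηR T)
    (integral_exp_mul_sum_sub_sum_condExp_sq_le_one hadapted hbdd hmds hη0.le hηR T) hδ0).trans
    (measure_mono fun ω hω => ?_)
  rw [Set.mem_ofPred_eq] at hω ⊢
  rw [← sub_le_iff_le_add', le_div_iff₀ hη0]
  linarith

/-- Simplified Freedman's inequality: for a martingale difference sequence `X_1, …, X_T`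
with `|X_ℓ| ≤ R` a.s., any `δ' ∈ (0,1)` and `η ∈ (0, 1/R)`, with probability at least
`1 − δ'`, `Σ_{ℓ=1}^T X_ℓ ≤ η·Σ_{ℓ=1}^T E[X_ℓ² | F_{ℓ−1}] + log(1/δ')/η`. -/
theorem stmt_6 (Ω : Type) [m0 : MeasurableSpace Ω] (P : Measure Ω) [IsProbabilityMeasure P]
    (𝓕 : Filtration ℕ m0) (T : ℕ) (R : ℝ) (X : ℕ → Ω → ℝ)
    (hadapted : ∀ ℓ, StronglyMeasurable[𝓕 ℓ] (X ℓ))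
    (hint : ∀ ℓ, Integrable (X ℓ) P)
    (hmds : ∀ ℓ, 1 ≤ ℓ → P[X ℓ | 𝓕 (ℓ - 1)] =ᵐ[P] 0)
    (hbdd : ∀ ℓ, ∀ᵐ ω ∂P, |X ℓ ω| ≤ R)
    (δ' η : ℝ) (hδ0 : 0 < δ') (hδ1 : δ' < 1) (hη0 : 0 < η) (hη1 : η < 1 / R) :
    ENNReal.ofReal (1 - δ') ≤
      P {ω | ∑ ℓ ∈ Finset.Icc 1 T, X ℓ ω ≤
        η * ∑ ℓ ∈ Finset.Icc 1 T, (P[fun ω' => (X ℓ ω') ^ 2 | 𝓕 (ℓ - 1)]) ω +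
          Real.log (1 / δ') / η} :=
  stmt_6_general Ω (m0 := m0) P 𝓕 T R X hadapted hmds hbdd δ' η hδ0 hη0 hη1
end

section
/- There exists a universal constant C′ > 0 with the following property: let (Ω, F, P) be a probability space with filtration (F_ℓ)_{ℓ≥0}, let δ′ ∈ (0,1), β ∈ (0,1], B̃ > 0, and let (Z_ℓ)_{ℓ≥1} be a sequence of random variables adapted to (F_ℓ) satisfying 0 ≤ Z_ℓ ≤ B̃ almost surely for all ℓ. Then with probability at least 1 − 2δ′, simultaneously for all natural numbers T ≥ 1, (1 − β)·Σ_{t=1}^T E[Z_t | F_{t−1}] − 2·B̃·C′·log(T/δ′)/β ≤ Σ_{ℓ=1}^T Z_ℓ ≤ (1 + β)·Σ_{t=1}^T E[Z_t | F_{t−1}] + 2·B̃·C′·log(T/δ′)/β. -/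
/-!
For `s ∈ ℝ` let `φ(s) = (e^{sB} - 1) / B`. By convexity `e^{sz} ≤ 1 + φ(s) z` on `[0, B]`, and
`1 + x ≤ e^x`, so `E_t[e^{s Z_t}] ≤ e^{φ(s) E_t[Z_t]}` and
`exp (s ∑_{t ≤ T} Z_t - φ(s) ∑_{t ≤ T} E_t[Z_t])` is a supermartingale starting at `1`.
By Markov's inequality it exceeds `(T/δ')²` with probability at most `(δ'/T)²`, and a union bound
over `T ≥ 1` costs `δ'² ζ(2) ≤ δ'` for each of `s = ±β/B` once `δ' ≤ 1/2` (for larger `δ'` the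
claim is empty). Off this event, `e^β - 1 ≤ β(1 + β)` and `1 - e^{-β} ≥ β(1 - β)` give the
two-sided bound with `C' = 1`.
-/

open MeasureTheory ProbabilityTheory Real Finset

lemma mul_le_abs_mul_of_mem_Icc {a z B : ℝ} (hz : z ∈ Set.Icc 0 B) : a * z ≤ |a| * B :=
  (mul_le_mul_of_nonneg_right (le_abs_self a) hz.1).trans
    (mul_le_mul_of_nonneg_left hz.2 (abs_nonneg a))

noncomputable def expChordSlope (s B : ℝ) : ℝ := (exp (s * B) - 1) / B

lemma exp_mul_le_one_add_expChordSlope_mul {s B z : ℝ} (hB : 0 < B) (hz : z ∈ Set.Icc 0 B) :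
    exp (s * z) ≤ 1 + expChordSlope s B * z := by
  have hzB : z / B ≤ 1 := (div_le_one hB).2 hz.2
  have hconv := convexOn_exp.2 (Set.mem_univ 0) (Set.mem_univ (s * B))
    (sub_nonneg.2 hzB) (div_nonneg hz.1 hB.le) (sub_add_cancel 1 (z / B))
  have hcomb : (1 - z / B) • (0 : ℝ) + (z / B) • (s * B) = s * z := by
    simp only [smul_eq_mul, mul_zero, zero_add]
    field_simp
  rw [hcomb, smul_eq_mul, smul_eq_mul, exp_zero] at hconv
  calc exp (s * z) ≤ (1 - z / B) * 1 + z / B * exp (s * B) := hconv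
    _ = 1 + expChordSlope s B * z := by
      unfold expChordSlope
      field_simp
      ring

lemma mul_expChordSlope_div_le {β B : ℝ} (hB : 0 < B) (hβ : |β| ≤ 1) :
    B * expChordSlope (β / B) B ≤ β * (1 + β) := by
  have := (abs_le.1 (abs_exp_sub_one_sub_id_le hβ)).2
  rw [expChordSlope, div_mul_cancel₀ β hB.ne', mul_div_cancel₀ _ hB.ne']
  nlinarith

section CondExp

variable {Ω : Type*} {m m0 : MeasurableSpace Ω} {μ : Measure Ω} {f : Ω → ℝ} {B : ℝ}

lemma ae_condExp_mem_Icc (hB : 0 ≤ B) (hf : ∀ᵐ ω ∂μ, f ω ∈ Set.Icc 0 B) :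
    ∀ᵐ ω ∂μ, μ[f | m] ω ∈ Set.Icc 0 B := by
  filter_upwards [condExp_nonneg (m := m) (hf.mono fun _ h ↦ h.1),
    condExp_le_nonneg_const (m := m) hB (hf.mono fun _ h ↦ h.2)] with ω h0 hB
  exact ⟨h0, hB⟩

lemma integrable_exp_mul_of_mem_Icc [IsFiniteMeasure μ] (hf : Integrable f μ)
    (hfB : ∀ᵐ ω ∂μ, f ω ∈ Set.Icc 0 B) (s : ℝ) : Integrable (fun ω ↦ exp (s * f ω)) μ :=
  .of_bound (continuous_exp.comp_aestronglyMeasurable (hf.1.const_mul s)) (exp (|s| * B))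
    (hfB.mono fun ω hω ↦ by
      rw [norm_of_nonneg (exp_pos _).le]
      exact exp_le_exp.2 (mul_le_abs_mul_of_mem_Icc hω))

lemma condExp_exp_mul_le [IsFiniteMeasure μ] (hm : m ≤ m0) (hB : 0 < B) (hf : Integrable f μ)
    (hfB : ∀ᵐ ω ∂μ, f ω ∈ Set.Icc 0 B) (s : ℝ) :
    μ[fun ω ↦ exp (s * f ω) | m] ≤ᵐ[μ] fun ω ↦ exp (expChordSlope s B * μ[f | m] ω) := by
  set c := expChordSlope s B
  have hchord : (fun ω ↦ exp (s * f ω)) ≤ᵐ[μ] fun ω ↦ 1 + c * f ω :=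
    hfB.mono fun ω hω ↦ exp_mul_le_one_add_expChordSlope_mul hB hω
  have hlin_int : Integrable (fun ω ↦ 1 + c * f ω) μ := (integrable_const 1).add (hf.const_mul c)
  have hlin : μ[fun ω ↦ 1 + c * f ω | m] =ᵐ[μ] fun ω ↦ 1 + c * μ[f | m] ω := by
    have hsplit : (fun ω ↦ 1 + c * f ω) = (fun _ ↦ (1 : ℝ)) + c • f := rfl
    rw [hsplit]
    filter_upwards [condExp_add (m := m) (integrable_const (1 : ℝ)) (hf.smul c),
      condExp_smul (m := m) c f] with ω hadd hsmul
    rw [hadd, Pi.add_apply, condExp_const hm, hsmul]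
    rfl
  filter_upwards [condExp_mono (m := m) (integrable_exp_mul_of_mem_Icc hf hfB s) hlin_int hchord,
    hlin] with ω hle heq
  linarith [add_one_le_exp (c * μ[f | m] ω)]

end CondExp

lemma measure_iUnion_le_of_le_div_sq {Ω : Type*} {m0 : MeasurableSpace Ω} {μ : Measure Ω}
    (A : ℕ → Set Ω) {δ : ℝ} (hδ0 : 0 ≤ δ) (hδ : δ ≤ 1 / 2)
    (hA : ∀ T, 1 ≤ T → μ (A T) ≤ ENNReal.ofReal ((δ / T) ^ 2)) :
    μ (⋃ T, ⋃ (_ : 1 ≤ T), A T) ≤ ENNReal.ofReal δ := by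
  have hzeta : HasSum (fun T : ℕ ↦ (δ / T) ^ 2) (δ ^ 2 * (π ^ 2 / 6)) := by
    have hterm : (fun T : ℕ ↦ (δ / T) ^ 2) = fun T : ℕ ↦ δ ^ 2 * (1 / (T : ℝ) ^ 2) := by
      funext T
      ring
    rw [hterm]
    exact hasSum_zeta_two.mul_left _
  calc μ (⋃ T, ⋃ (_ : 1 ≤ T), A T)
      ≤ ∑' T, μ (⋃ (_ : 1 ≤ T), A T) := measure_iUnion_le _
    _ ≤ ∑' T : ℕ, ENNReal.ofReal ((δ / T) ^ 2) := by
        refine ENNReal.tsum_le_tsum fun T ↦ ?_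
        by_cases hT : 1 ≤ T
        · simpa [hT] using hA T hT
        · simp [hT]
    _ = ENNReal.ofReal (δ ^ 2 * (π ^ 2 / 6)) := by
        rw [← ENNReal.ofReal_tsum_of_nonneg (fun T ↦ by positivity) hzeta.summable,
          hzeta.tsum_eq]
    _ ≤ ENNReal.ofReal δ := by
        refine ENNReal.ofReal_le_ofReal ?_
        have hπ : π ^ 2 < 10 := by nlinarith [pi_lt_d2, pi_pos]
        nlinarith [mul_le_mul hδ hπ.le (sq_nonneg π) (by norm_num)]

section CompensatedSum

variable {Ω : Type*} {m0 : MeasurableSpace Ω} (P : Measure Ω) (𝓕 : Filtration ℕ m0)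
  (Z : ℕ → Ω → ℝ)

noncomputable def compensatedSum (s c : ℝ) (T : ℕ) (ω : Ω) : ℝ :=
  s * ∑ t ∈ Icc 1 T, Z t ω - c * ∑ t ∈ Icc 1 T, P[Z t | 𝓕 (t - 1)] ω

variable {P 𝓕 Z} {B : ℝ}

lemma compensatedSum_succ (s c : ℝ) (T : ℕ) (ω : Ω) :
    compensatedSum P 𝓕 Z s c (T + 1) ω =
      compensatedSum P 𝓕 Z s c T ω + (s * Z (T + 1) ω - c * P[Z (T + 1) | 𝓕 T] ω) := by
  simp only [compensatedSum, sum_Icc_succ_top (Nat.le_add_left 1 T), Nat.add_sub_cancel]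
  ring

lemma stronglyAdapted_compensatedSum (hZ : StronglyAdapted 𝓕 Z) (s c : ℝ) :
    StronglyAdapted 𝓕 (compensatedSum P 𝓕 Z s c) := by
  intro T
  have hsum : ∀ g : ℕ → Ω → ℝ, (∀ t ≤ T, StronglyMeasurable[𝓕 T] (g t)) →
      StronglyMeasurable[𝓕 T] fun ω ↦ ∑ t ∈ Icc 1 T, g t ω := fun g hg ↦
    Finset.stronglyMeasurable_fun_sum _ fun t ht ↦ hg t (mem_Icc.1 ht).2
  refine ((hsum Z fun t ht ↦ (hZ t).mono (𝓕.mono ht)).const_mul s).sub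
    ((hsum _ fun t ht ↦ stronglyMeasurable_condExp.mono (𝓕.mono (by omega))).const_mul c)

lemma ae_compensatedSum_le (hB : 0 ≤ B) (hZB : ∀ t, ∀ᵐ ω ∂P, Z t ω ∈ Set.Icc 0 B)
    (s c : ℝ) (T : ℕ) :
    ∀ᵐ ω ∂P, compensatedSum P 𝓕 Z s c T ω ≤ T * ((|s| + |c|) * B) := by
  have hcond : ∀ t, ∀ᵐ ω ∂P, P[Z t | 𝓕 (t - 1)] ω ∈ Set.Icc 0 B :=
    fun t ↦ ae_condExp_mem_Icc hB (hZB t)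
  filter_upwards [ae_all_iff.2 hZB, ae_all_iff.2 hcond] with ω hZω hcondω
  induction T with
  | zero => simp [compensatedSum]
  | succ T ih =>
    rw [compensatedSum_succ]
    have h1 := mul_le_abs_mul_of_mem_Icc (a := s) (hZω (T + 1))
    have h2 := mul_le_abs_mul_of_mem_Icc (a := -c) (hcondω (T + 1))
    rw [abs_neg, Nat.add_sub_cancel] at h2
    push_cast
    linarith

lemma integrable_exp_compensatedSum [IsFiniteMeasure P] (hZ : StronglyAdapted 𝓕 Z) (hB : 0 ≤ B)
    (hZB : ∀ t, ∀ᵐ ω ∂P, Z t ω ∈ Set.Icc 0 B) (s c : ℝ) (T : ℕ) :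
    Integrable (fun ω ↦ exp (compensatedSum P 𝓕 Z s c T ω)) P :=
  .of_bound (continuous_exp.comp_stronglyMeasurable
      ((stronglyAdapted_compensatedSum hZ s c T).mono (𝓕.le T))).aestronglyMeasurable
    (exp (T * ((|s| + |c|) * B)))
    ((ae_compensatedSum_le hB hZB s c T).mono fun ω hω ↦ by
      rw [norm_of_nonneg (exp_pos _).le]
      exact exp_le_exp.2 hω)

lemma supermartingale_exp_compensatedSum [IsFiniteMeasure P] (hZ : StronglyAdapted 𝓕 Z)
    (hZint : ∀ t, Integrable (Z t) P) (hB : 0 < B) (hZB : ∀ t, ∀ᵐ ω ∂P, Z t ω ∈ Set.Icc 0 B)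
    (s : ℝ) :
    Supermartingale (fun T ω ↦ exp (compensatedSum P 𝓕 Z s (expChordSlope s B) T ω)) 𝓕 P := by
  set c := expChordSlope s B
  refine supermartingale_nat
    (fun T ↦ continuous_exp.comp_stronglyMeasurable (stronglyAdapted_compensatedSum hZ s c T))
    (integrable_exp_compensatedSum hZ hB.le hZB s c) fun T ↦ ?_
  set F : Ω → ℝ := fun ω ↦ exp (compensatedSum P 𝓕 Z s c T ω - c * P[Z (T + 1) | 𝓕 T] ω)
  have hsplit : (fun ω ↦ exp (compensatedSum P 𝓕 Z s c (T + 1) ω)) =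
      F * fun ω ↦ exp (s * Z (T + 1) ω) := by
    funext ω
    simp only [compensatedSum_succ, Pi.mul_apply, F, ← exp_add]
    ring_nf
  have hF : StronglyMeasurable[𝓕 T] F :=
    continuous_exp.comp_stronglyMeasurable
      ((stronglyAdapted_compensatedSum hZ s c T).sub (stronglyMeasurable_condExp.const_mul c))
  rw [hsplit]
  filter_upwards [condExp_mul_of_stronglyMeasurable_left hF
      (hsplit ▸ integrable_exp_compensatedSum hZ hB.le hZB s c (T + 1))
      (integrable_exp_mul_of_mem_Icc (hZint (T + 1)) (hZB (T + 1)) s),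
    condExp_exp_mul_le (𝓕.le T) hB (hZint (T + 1)) (hZB (T + 1)) s] with ω hpull hle
  rw [hpull, Pi.mul_apply]
  calc F ω * P[fun ω ↦ exp (s * Z (T + 1) ω) | 𝓕 T] ω
      ≤ F ω * exp (c * P[Z (T + 1) | 𝓕 T] ω) := mul_le_mul_of_nonneg_left hle (exp_pos _).le
    _ = exp (compensatedSum P 𝓕 Z s c T ω) := by simp only [F, ← exp_add, sub_add_cancel]

lemma measure_le_compensatedSum_le [IsProbabilityMeasure P] (hZ : StronglyAdapted 𝓕 Z)
    (hZint : ∀ t, Integrable (Z t) P) (hB : 0 < B) (hZB : ∀ t, ∀ᵐ ω ∂P, Z t ω ∈ Set.Icc 0 B)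
    (s a : ℝ) (T : ℕ) :
    P {ω | a ≤ compensatedSum P 𝓕 Z s (expChordSlope s B) T ω} ≤ ENNReal.ofReal (exp (-a)) := by
  have hint := integrable_exp_compensatedSum hZ hB.le hZB s (expChordSlope s B) T
  have hmean : ∫ ω, exp (compensatedSum P 𝓕 Z s (expChordSlope s B) T ω) ∂P ≤ 1 := by
    simpa [compensatedSum] using
      (supermartingale_exp_compensatedSum hZ hZint hB hZB s).setIntegral_le (Nat.zero_le T)
        MeasurableSet.univ
  rw [← ofReal_measureReal]
  refine ENNReal.ofReal_le_ofReal ((measure_ge_le_exp_mul_mgf a zero_le_one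
    (by simpa only [one_mul] using hint)).trans ?_)
  simp only [mgf, one_mul, neg_one_mul]
  exact mul_le_of_le_one_right (exp_pos _).le hmean

lemma measure_iUnion_log_le_compensatedSum_le [IsProbabilityMeasure P] (hZ : StronglyAdapted 𝓕 Z)
    (hZint : ∀ t, Integrable (Z t) P) (hB : 0 < B) (hZB : ∀ t, ∀ᵐ ω ∂P, Z t ω ∈ Set.Icc 0 B)
    {δ : ℝ} (hδ0 : 0 < δ) (hδ : δ ≤ 1 / 2) (s : ℝ) :
    P (⋃ T : ℕ, ⋃ (_ : 1 ≤ T),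
      {ω | 2 * log (T / δ) ≤ compensatedSum P 𝓕 Z s (expChordSlope s B) T ω}) ≤
      ENNReal.ofReal δ :=
  measure_iUnion_le_of_le_div_sq _ hδ0.le hδ fun T hT ↦ by
    have hT0 : (0 : ℝ) < T / δ := div_pos (by exact_mod_cast hT) hδ0
    have hexp : exp (-(2 * log (T / δ))) = (δ / T) ^ 2 := by
      rw [← inv_div (T : ℝ) δ, inv_pow, exp_neg, ← exp_log (pow_pos hT0 2), log_pow, Nat.cast_ofNat]
    exact hexp ▸ measure_le_compensatedSum_le hZ hZint hB hZB s _ T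

end CompensatedSum

lemma sub_le_and_le_add_of_expChordSlope_lt {β B S G L : ℝ} (hβ0 : 0 < β) (hβ1 : β ≤ 1) (hB : 0 < B)
    (hG : 0 ≤ G) (hup : β / B * S - expChordSlope (β / B) B * G < L)
    (hlo : -β / B * S - expChordSlope (-β / B) B * G < L) :
    (1 - β) * G - B * L / β ≤ S ∧ S ≤ (1 + β) * G + B * L / β := by
  have hcup := mul_le_mul_of_nonneg_right
    (mul_expChordSlope_div_le (β := β) hB (abs_le.2 ⟨by linarith, hβ1⟩)) hG
  have hclo := mul_le_mul_of_nonneg_right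
    (mul_expChordSlope_div_le (β := -β) hB (abs_le.2 ⟨by linarith, by linarith⟩)) hG
  have hup' := mul_lt_mul_of_pos_left hup hB
  have hlo' := mul_lt_mul_of_pos_left hlo hB
  rw [mul_sub, ← mul_assoc, mul_div_cancel₀ β hB.ne', ← mul_assoc] at hup'
  rw [mul_sub, ← mul_assoc, mul_div_cancel₀ (-β) hB.ne', ← mul_assoc] at hlo'
  have hL : B * L / β * β = B * L := div_mul_cancel₀ _ hβ0.ne'
  constructor
  · refine le_of_mul_le_mul_right ?_ hβ0
    rw [sub_mul, hL]
    linarith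
  · refine le_of_mul_le_mul_right ?_ hβ0
    rw [add_mul, hL]
    linarith

/-- Anytime two-sided Freedman-type bound for adapted nonnegative bounded sequences:
there is a universal constant `C' > 0` such that for any adapted sequence `(Z_ℓ)` with
`0 ≤ Z_ℓ ≤ B̃` a.s., `δ' ∈ (0,1)`, `β ∈ (0,1]`, with probability at least `1 − 2δ'`,
simultaneously for all `T ≥ 1`,
`(1−β)·Σ_{t=1}^T E[Z_t|F_{t−1}] − 2B̃C'·log(T/δ')/β ≤ Σ_{ℓ=1}^T Z_ℓ
  ≤ (1+β)·Σ_{t=1}^T E[Z_t|F_{t−1}] + 2B̃C'·log(T/δ')/β`. -/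
theorem stmt_8 :
    ∃ C' : ℝ, 0 < C' ∧
      ∀ (Ω : Type) [m0 : MeasurableSpace Ω] (P : Measure Ω) [IsProbabilityMeasure P]
        (𝓕 : Filtration ℕ m0) (δ' β B : ℝ), 0 < δ' → δ' < 1 → 0 < β → β ≤ 1 → 0 < B →
        ∀ Z : ℕ → Ω → ℝ,
        (∀ ℓ, StronglyMeasurable[𝓕 ℓ] (Z ℓ)) →
        (∀ ℓ, Integrable (Z ℓ) P) →
        (∀ ℓ, ∀ᵐ ω ∂P, 0 ≤ Z ℓ ω ∧ Z ℓ ω ≤ B) →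
        ENNReal.ofReal (1 - 2 * δ') ≤
          P {ω | ∀ T : ℕ, 1 ≤ T →
            ((1 - β) * ∑ t ∈ Finset.Icc 1 T, (P[Z t | 𝓕 (t - 1)]) ω -
                2 * B * C' * Real.log ((T : ℝ) / δ') / β ≤ ∑ ℓ ∈ Finset.Icc 1 T, Z ℓ ω ∧
              ∑ ℓ ∈ Finset.Icc 1 T, Z ℓ ω ≤
                (1 + β) * ∑ t ∈ Finset.Icc 1 T, (P[Z t | 𝓕 (t - 1)]) ω +
                  2 * B * C' * Real.log ((T : ℝ) / δ') / β)} := by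
  refine ⟨1, one_pos, fun Ω m0 P _ 𝓕 δ' β B hδ0 hδ1 hβ0 hβ1 hB Z hZ hZint hZB ↦ ?_⟩
  rcases lt_or_ge (1 / 2) δ' with hδ | hδ
  · simp [ENNReal.ofReal_eq_zero.2 (by linarith : 1 - 2 * δ' ≤ 0)]
  set bad : ℝ → Set Ω := fun s ↦ ⋃ T : ℕ, ⋃ (_ : 1 ≤ T),
    {ω | 2 * log (T / δ') ≤ compensatedSum P 𝓕 Z s (expChordSlope s B) T ω}
  have hbad : P (bad (β / B) ∪ bad (-β / B)) ≤ ENNReal.ofReal (2 * δ') := by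
    rw [two_mul, ENNReal.ofReal_add hδ0.le hδ0.le]
    exact (measure_union_le _ _).trans (add_le_add
      (measure_iUnion_log_le_compensatedSum_le hZ hZint hB hZB hδ0 hδ _)
      (measure_iUnion_log_le_compensatedSum_le hZ hZint hB hZB hδ0 hδ _))
  calc ENNReal.ofReal (1 - 2 * δ') = 1 - ENNReal.ofReal (2 * δ') := by
        rw [ENNReal.ofReal_sub _ (by linarith), ENNReal.ofReal_one]
    _ ≤ 1 - P (bad (β / B) ∪ bad (-β / B)) := tsub_le_tsub_left hbad 1
    _ ≤ P (bad (β / B) ∪ bad (-β / B))ᶜ := by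
        rw [tsub_le_iff_left, ← measure_univ (μ := P)]
        exact measure_univ_le_add_compl _
    _ ≤ _ := measure_mono_ae <| by
        filter_upwards [ae_all_iff.2 fun t ↦ ae_condExp_mem_Icc (m := 𝓕 (t - 1)) hB.le (hZB t)]
          with ω hcond hgood T hT
        have hω : ω ∉ bad (β / B) ∪ bad (-β / B) := hgood
        simp only [bad, Set.mem_union, Set.mem_iUnion, Set.mem_ofPred_eq, not_or, not_exists,
          not_le] at hω
        rw [show 2 * B * 1 * log (T / δ') / β = B * (2 * log (T / δ')) / β by ring]
        exact sub_le_and_le_add_of_expChordSlope_lt hβ0 hβ1 hB (sum_nonneg fun t _ ↦ (hcond t).1)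
          (hω.1 T hT) (hω.2 T hT)
end

section
/- Let X be a nonempty finite set with |X| = m, let K ≥ 1, and let d^1, …, d^K : X → ℝ satisfy d^k(x) ≥ 0 for all x and Σ_{x∈X} d^k(x) = 1 for each k. For each x′ ∈ X choose k(x′) ∈ {1,…,K} with d^{k(x′)}(x′) = max_{k∈[K]} d^k(x′), and define μ : X → ℝ by μ(x) = (1/m)·Σ_{x′∈X} d^{k(x′)}(x). Then μ is a convex combination of d^1, …, d^K, μ(x) ≥ (1/m)·max_{k∈[K]} d^k(x) for every x, and for every j ∈ {1,…,K}, Σ_{x∈X : d^j(x) > 0} d^j(x)²/μ(x) ≤ m. -/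
open Finset

/-- The uniform mixture over pointwise-maximizing distributions: if `d^1,…,d^K` are probability
distributions on a finite set `X` of cardinality `m`, `kk x'` selects an index maximizing
`d^k(x')`, and `μ(x) = (1/m)·Σ_{x'} d^{kk x'}(x)`, then `μ` is a convex combination of the
`d^k`, it dominates `(1/m)·max_k d^k(x)` pointwise, and
`Σ_{x : d^j(x) > 0} d^j(x)²/μ(x) ≤ m` for every `j`. -/
theorem stmt_12 (X : Type) [Fintype X] [Nonempty X] (m : ℕ) (hm : Fintype.card X = m)
    (K : ℕ) (hK : 1 ≤ K) (d : Fin K → X → ℝ)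
    (hd0 : ∀ k x, 0 ≤ d k x) (hd1 : ∀ k, ∑ x, d k x = 1)
    (kk : X → Fin K) (hkk : ∀ x' k, d k x' ≤ d (kk x') x')
    (μ : X → ℝ) (hμ : ∀ x, μ x = (1 / (m : ℝ)) * ∑ x', d (kk x') x) :
    (∃ β : Fin K → ℝ, (∀ k, 0 ≤ β k) ∧ (∑ k, β k = 1) ∧
      ∀ x, μ x = ∑ k, β k * d k x) ∧
    (∀ x k, (1 / (m : ℝ)) * d k x ≤ μ x) ∧
    (∀ j : Fin K,
      ∑ x ∈ Finset.univ.filter (fun x => 0 < d j x), (d j x) ^ 2 / μ x ≤ (m : ℝ)) := by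
  have hm1 : 1 ≤ m := by
    rw [← hm]; exact Fintype.card_pos
  have hmpos : (0 : ℝ) < m := by exact_mod_cast hm1
  -- fiberwise decomposition
  have hfib : ∀ f : Fin K → ℝ, ∑ x' : X, f (kk x') =
      ∑ k : Fin K, ((Finset.univ.filter (fun x' => kk x' = k)).card : ℝ) * f k := by
    intro f
    rw [← Finset.sum_fiberwise_of_maps_to (g := kk) (fun x _ => Finset.mem_univ (kk x))]
    refine Finset.sum_congr rfl fun k _ => ?_
    rw [Finset.sum_congr rfl (fun x hx => by
      rw [(Finset.mem_filter.mp hx).2]), Finset.sum_const, nsmul_eq_mul]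
  have hdom : ∀ x k, (1 / (m : ℝ)) * d k x ≤ μ x := by
    intro x k
    rw [hμ]
    apply mul_le_mul_of_nonneg_left _ (by positivity)
    calc d k x ≤ d (kk x) x := hkk x k
      _ ≤ ∑ x', d (kk x') x := Finset.single_le_sum (fun x' _ => hd0 _ _) (Finset.mem_univ x)
  refine ⟨⟨fun k => ((Finset.univ.filter (fun x' => kk x' = k)).card : ℝ) / m,
      fun k => by positivity, ?_, ?_⟩, hdom, ?_⟩
  · rw [← Finset.sum_div, div_eq_one_iff_eq (ne_of_gt hmpos)]
    rw [← Nat.cast_sum]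
    norm_cast
    rw [← Finset.card_eq_sum_card_fiberwise (fun x (_ : x ∈ Finset.univ) => Finset.mem_univ (kk x)),
      Finset.card_univ, hm]
  · intro x
    rw [hμ, hfib (fun k => d k x), Finset.mul_sum]
    refine Finset.sum_congr rfl fun k _ => by ring
  · intro j
    have key : ∀ x ∈ Finset.univ.filter (fun x => 0 < d j x),
        (d j x) ^ 2 / μ x ≤ m * d j x := by
      intro x hx
      have hdx : 0 < d j x := (Finset.mem_filter.mp hx).2
      have hige : (1 / (m : ℝ)) * d j x ≤ μ x := hdom x j
      have hpos : 0 < (1 / (m : ℝ)) * d j x := by positivity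
      calc (d j x) ^ 2 / μ x ≤ (d j x) ^ 2 / ((1 / (m : ℝ)) * d j x) :=
            div_le_div_of_nonneg_left (by positivity) hpos hige
        _ = m * d j x := by field_simp
    calc ∑ x ∈ Finset.univ.filter (fun x => 0 < d j x), (d j x) ^ 2 / μ x
        ≤ ∑ x ∈ Finset.univ.filter (fun x => 0 < d j x), m * d j x := Finset.sum_le_sum key
      _ ≤ ∑ x : X, m * d j x := Finset.sum_le_sum_of_subset_of_nonneg (Finset.filter_subset _ _)
          (fun x _ _ => mul_nonneg hmpos.le (hd0 _ _))
      _ = m := by rw [← Finset.mul_sum, hd1, mul_one]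
end

section
/- For all real numbers x₁, x₂, y₁, y₂ ≥ 0 and all β ≥ 1, the β-distance is subadditive: dist^β(x₁ + x₂, y₁ + y₂) ≤ dist^β(x₁, y₁) + dist^β(x₂, y₂). -/
/-!
Choose minimisers `α₁, α₂` for the two terms on the right. The point `α₁ x₁ + α₂ x₂` lies in
`[(x₁ + x₂)/β, β (x₁ + x₂)]`, so it is `α (x₁ + x₂)` for an admissible `α` (the weighted mean of
`α₁` and `α₂`), and the triangle inequality finishes.
-/

/-- The `β`-distance: `dist^β(x,y) = min_{α ∈ [1/β, β]} |α·x − y|`. -/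
noncomputable def distB (β x y : ℝ) : ℝ :=
  sInf ((fun α => |α * x - y|) '' Set.Icc (1 / β) β)

open Set

lemma distB_le_abs_sub {β α : ℝ} (x y : ℝ) (hα : α ∈ Icc (1 / β) β) :
    distB β x y ≤ |α * x - y| :=
  csInf_le ⟨0, by rintro _ ⟨a, -, rfl⟩; positivity⟩ ⟨α, hα, rfl⟩

lemma exists_distB_eq {β : ℝ} (x y : ℝ) (hβ : 1 ≤ β) :
    ∃ α ∈ Icc (1 / β) β, distB β x y = |α * x - y| :=
  have hne : (Icc (1 / β) β).Nonempty :=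
    ⟨1, div_le_one_of_le₀ hβ (zero_le_one.trans hβ), hβ⟩
  isCompact_Icc.exists_sInf_image_eq hne (by fun_prop)

lemma mul_mem_Icc_div_mul {β α x : ℝ} (hx : 0 ≤ x) (hα : α ∈ Icc (1 / β) β) :
    α * x ∈ Icc (x / β) (β * x) := by
  rw [← one_div_mul_eq_div]
  exact ⟨mul_le_mul_of_nonneg_right hα.1 hx, mul_le_mul_of_nonneg_right hα.2 hx⟩

lemma exists_mul_eq_of_mem_Icc {β x p : ℝ} (hβ : 1 ≤ β) (hx : 0 ≤ x)
    (hp : p ∈ Icc (x / β) (β * x)) : ∃ α ∈ Icc (1 / β) β, α * x = p := by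
  have hβ0 : 0 < β := zero_lt_one.trans_le hβ
  rcases hx.eq_or_lt with rfl | hx
  · refine ⟨1, ⟨div_le_one_of_le₀ hβ hβ0.le, hβ⟩, ?_⟩
    simp only [zero_div, mul_zero, Icc_self, mem_singleton_iff] at hp
    simp [hp]
  · refine ⟨p / x, ⟨?_, ?_⟩, div_mul_cancel₀ p hx.ne'⟩
    · rw [le_div_iff₀ hx, one_div_mul_eq_div]
      exact hp.1
    · rw [div_le_iff₀ hx]
      exact hp.2

lemma distB_le_abs_sub_of_mem_Icc {β x p : ℝ} (y : ℝ) (hβ : 1 ≤ β) (hx : 0 ≤ x)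
    (hp : p ∈ Icc (x / β) (β * x)) : distB β x y ≤ |p - y| := by
  obtain ⟨α, hα, rfl⟩ := exists_mul_eq_of_mem_Icc hβ hx hp
  exact distB_le_abs_sub x y hα

theorem stmt_14_general (x₁ x₂ y₁ y₂ β : ℝ) (hx₁ : 0 ≤ x₁) (hx₂ : 0 ≤ x₂)
    (hβ : 1 ≤ β) :
    distB β (x₁ + x₂) (y₁ + y₂) ≤ distB β x₁ y₁ + distB β x₂ y₂ := by
  obtain ⟨α₁, hα₁, h₁⟩ := exists_distB_eq x₁ y₁ hβ
  obtain ⟨α₂, hα₂, h₂⟩ := exists_distB_eq x₂ y₂ hβ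
  have hp₁ := mul_mem_Icc_div_mul hx₁ hα₁
  have hp₂ := mul_mem_Icc_div_mul hx₂ hα₂
  have hp : α₁ * x₁ + α₂ * x₂ ∈ Icc ((x₁ + x₂) / β) (β * (x₁ + x₂)) := by
    rw [add_div, mul_add]
    exact ⟨add_le_add hp₁.1 hp₂.1, add_le_add hp₁.2 hp₂.2⟩
  calc distB β (x₁ + x₂) (y₁ + y₂)
      ≤ |(α₁ * x₁ - y₁) + (α₂ * x₂ - y₂)| := by
        convert distB_le_abs_sub_of_mem_Icc (y₁ + y₂) hβ (add_nonneg hx₁ hx₂) hp using 2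
        ring
    _ ≤ distB β x₁ y₁ + distB β x₂ y₂ := h₁ ▸ h₂ ▸ abs_add_le _ _

/-- Subadditivity of the `β`-distance:
`dist^β(x₁ + x₂, y₁ + y₂) ≤ dist^β(x₁, y₁) + dist^β(x₂, y₂)`. -/
theorem stmt_14 (x₁ x₂ y₁ y₂ β : ℝ) (hx₁ : 0 ≤ x₁) (hx₂ : 0 ≤ x₂)
    (hy₁ : 0 ≤ y₁) (hy₂ : 0 ≤ y₂) (hβ : 1 ≤ β) :
    distB β (x₁ + x₂) (y₁ + y₂) ≤ distB β x₁ y₁ + distB β x₂ y₂ :=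
  stmt_14_general x₁ x₂ y₁ y₂ β hx₁ hx₂ hβ
end

section
/- For all real numbers x, y, z ≥ 0 and all β₁ ≥ 1, β₂ ≥ 1, the β-distance satisfies the weighted triangle-type inequality dist^{β₁·β₂}(x, z) ≤ β₂·dist^{β₁}(x, y) + dist^{β₂}(y, z). -/
lemma distB_exists_min (β x y : ℝ) (hβ : 1 ≤ β) :
    ∃ α ∈ Set.Icc (1 / β) β, |α * x - y| = distB β x y := by
  have hβ0 : 0 < β := lt_of_lt_of_le one_pos hβ
  have hne : (Set.Icc (1 / β) β).Nonempty := by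
    refine ⟨1, ?_, hβ⟩
    rw [div_le_one hβ0]; exact hβ
  obtain ⟨α, hα, hmin⟩ := isCompact_Icc.exists_isMinOn hne
    ((continuous_abs.comp ((continuous_id.mul continuous_const).sub continuous_const)).continuousOn)
  refine ⟨α, hα, le_antisymm ?_ ?_⟩
  · exact le_csInf (hne.image _) (by rintro _ ⟨a, ha, rfl⟩; exact hmin ha)
  · exact csInf_le ⟨0, by rintro _ ⟨a, _, rfl⟩; exact abs_nonneg _⟩ ⟨α, hα, rfl⟩

/-- Weighted triangle-type inequality for the `β`-distance:
`dist^{β₁β₂}(x, z) ≤ β₂·dist^{β₁}(x, y) + dist^{β₂}(y, z)`. -/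
theorem stmt_15 (x y z β₁ β₂ : ℝ) (hx : 0 ≤ x) (hy : 0 ≤ y) (hz : 0 ≤ z)
    (hβ₁ : 1 ≤ β₁) (hβ₂ : 1 ≤ β₂) :
    distB (β₁ * β₂) x z ≤ β₂ * distB β₁ x y + distB β₂ y z := by
  have hβ₁0 : 0 < β₁ := lt_of_lt_of_le one_pos hβ₁
  have hβ₂0 : 0 < β₂ := lt_of_lt_of_le one_pos hβ₂
  obtain ⟨α₁, ⟨h1l, h1r⟩, he1⟩ := distB_exists_min β₁ x y hβ₁
  obtain ⟨α₂, ⟨h2l, h2r⟩, he2⟩ := distB_exists_min β₂ y z hβ₂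
  have hα₁0 : 0 < α₁ := lt_of_lt_of_le (by positivity) h1l
  have hα₂0 : 0 < α₂ := lt_of_lt_of_le (by positivity) h2l
  have hmem : α₁ * α₂ ∈ Set.Icc (1 / (β₁ * β₂)) (β₁ * β₂) := by
    constructor
    · have heq : 1 / (β₁ * β₂) = (1 / β₁) * (1 / β₂) := by ring
      rw [heq]
      exact mul_le_mul h1l h2l (by positivity) hα₁0.le
    · exact mul_le_mul h1r h2r hα₂0.le hβ₁0.le
  have key : |α₁ * α₂ * x - z| ≤ β₂ * |α₁ * x - y| + |α₂ * y - z| := by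
    have h : α₁ * α₂ * x - z = α₂ * (α₁ * x - y) + (α₂ * y - z) := by ring
    calc |α₁ * α₂ * x - z| ≤ |α₂ * (α₁ * x - y)| + |α₂ * y - z| := by
          rw [h]; exact abs_add_le _ _
      _ = α₂ * |α₁ * x - y| + |α₂ * y - z| := by
          rw [abs_mul, abs_of_pos hα₂0]
      _ ≤ β₂ * |α₁ * x - y| + |α₂ * y - z| := by
          have := mul_le_mul_of_nonneg_right h2r (abs_nonneg (α₁ * x - y))
          linarith
  have hle : distB (β₁ * β₂) x z ≤ |α₁ * α₂ * x - z| :=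
    csInf_le ⟨0, by rintro _ ⟨a, _, rfl⟩; exact abs_nonneg _⟩ ⟨α₁ * α₂, hmem, rfl⟩
  rw [← he1, ← he2]
  exact hle.trans key
end

section
/- Let S and A be nonempty finite sets. Let μ̃_h, μ̃_{h−1} : S × A → ℝ be nonnegative with Σ_{(s,a)} μ̃_h(s,a) = 1 and Σ_{(s,a)} μ̃_{h−1}(s,a) = 1; let μ̂_h, μ̂_{h−1} : S × A → ℝ be positive; let P : S × A → S → ℝ satisfy P(s | s′,a′) ≥ 0 and Σ_s P(s | s′,a′) = 1; let π : S → A → ℝ satisfy π(a | s) ≥ 0 and Σ_a π(a | s) = 1; and let w, ŵ : S × A → ℝ be nonnegative. Let (s_h, a_h) be a random element of S × A distributed according to μ̃_h, and independently let (s′, a′) be distributed according to μ̃_{h−1} and, conditionally on (s′, a′), let s″ be distributed according to P(· | s′, a′). Define the random function g : S × A → ℝ by g(s, a) = (w(s,a)/μ̂_h(s,a))·1[(s_h, a_h) = (s, a)] − (ŵ(s′,a′)/μ̂_{h−1}(s′,a′))·π(a | s)·1[s″ = s]. Then E[Σ_{(s,a)} g(s,a)²] ≤ Σ_{(s,a)}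 μ̃_h(s,a)·(w(s,a)/μ̂_h(s,a))² + Σ_{(s,a)} μ̃_{h−1}(s,a)·(ŵ(s,a)/μ̂_{h−1}(s,a))². -/
open MeasureTheory ProbabilityTheory

/-!
Write the gradient as `g = x - y` with `x, y ≥ 0`, where `x` is supported at `(s_h, a_h)` and
`y(s, a) = b · π(a | s) · 1[s'' = s]` with `b = ŵ(s', a') / μ̂_{h-1}(s', a')`. Dropping the cross
term gives `Σ g² ≤ x(s_h, a_h)² + b² Σ_a π(a | s'')² ≤ x(s_h, a_h)² + b²`, since `π(· | s'')` is a
probability vector. Taking expectations, the first term averages over `μ̃_h`, and the second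
over the `(s', a')`-marginal of `μ̃_{h-1} ⊗ P`, which is `μ̃_{h-1}`.
-/

theorem integral_comp_eq_sum_measureReal {Ω α : Type*} [MeasurableSpace Ω] {μ : Measure Ω}
    [IsFiniteMeasure μ] [Fintype α] [MeasurableSpace α] [MeasurableSingletonClass α]
    {X : Ω → α} (hX : Measurable X) (f : α → ℝ) :
    ∫ ω, f (X ω) ∂μ = ∑ x, μ.real {ω | X ω = x} * f x := by
  rw [← integral_map hX.aemeasurable (Integrable.of_finite (f := f)).aestronglyMeasurable,
    integral_fintype Integrable.of_finite]
  simp [map_measureReal_apply hX (measurableSet_singleton _), Set.preimage]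

theorem integrable_comp_of_fintype {Ω α : Type*} [MeasurableSpace Ω] {μ : Measure Ω}
    [IsFiniteMeasure μ] [Fintype α] [MeasurableSpace α] [MeasurableSingletonClass α]
    {X : Ω → α} (hX : Measurable X) (f : α → ℝ) :
    Integrable (fun ω => f (X ω)) μ :=
  Integrable.of_finite.comp_measurable hX

theorem sum_sq_le_one_of_sum_eq_one {ι : Type*} [Fintype ι] {p : ι → ℝ} (hp0 : ∀ i, 0 ≤ p i)
    (hp1 : ∑ i, p i = 1) : ∑ i, p i ^ 2 ≤ 1 := by
  simpa [hp1] using Finset.sum_sq_le_sq_sum_of_nonneg (s := Finset.univ) fun i _ => hp0 i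

theorem sum_sq_sub_le_of_nonneg {ι : Type*} [Fintype ι] {f g : ι → ℝ} (hf : ∀ i, 0 ≤ f i)
    (hg : ∀ i, 0 ≤ g i) : ∑ i, (f i - g i) ^ 2 ≤ ∑ i, f i ^ 2 + ∑ i, g i ^ 2 := by
  rw [← Finset.sum_add_distrib]
  gcongr with i
  nlinarith [mul_nonneg (hf i) (hg i)]

theorem sum_sq_gradient_le {S A : Type*} [Fintype S] [Fintype A] [DecidableEq S]
    [DecidableEq A] {a : S × A → ℝ} (ha : ∀ sa, 0 ≤ a sa) {b : ℝ} (hb : 0 ≤ b)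
    {π : S → A → ℝ} (hπ0 : ∀ s a, 0 ≤ π s a) (hπ1 : ∀ s, ∑ a, π s a = 1) (x : S × A) (s : S) :
    ∑ sa : S × A, (a sa * (if x = sa then (1 : ℝ) else 0) -
        b * π sa.1 sa.2 * (if s = sa.1 then (1 : ℝ) else 0)) ^ 2 ≤ a x ^ 2 + b ^ 2 := by
  calc _ ≤ ∑ sa : S × A, (a sa * (if x = sa then (1 : ℝ) else 0)) ^ 2 +
        ∑ sa : S × A, (b * π sa.1 sa.2 * (if s = sa.1 then (1 : ℝ) else 0)) ^ 2 :=
        sum_sq_sub_le_of_nonneg (fun sa => by have := ha sa; positivity) fun sa => by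
          have := hπ0 sa.1 sa.2; positivity
    _ = a x ^ 2 + b ^ 2 * ∑ a', π s a' ^ 2 := by
        simp [Fintype.sum_prod_type, mul_pow, Finset.mul_sum]
    _ ≤ a x ^ 2 + b ^ 2 := by
        gcongr
        simpa using mul_le_mul_of_nonneg_left (sum_sq_le_one_of_sum_eq_one (hπ0 s) (hπ1 s))
          (sq_nonneg b)

theorem stmt_17_general (S A : Type) [Fintype S] [Fintype A]
    [DecidableEq S] [DecidableEq A]
    [MeasurableSpace S] [MeasurableSingletonClass S]
    [MeasurableSpace A] [MeasurableSingletonClass A]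
    (μth μthprev : S × A → ℝ)
    (hμth0 : ∀ sa, 0 ≤ μth sa)
    (hμthprev0 : ∀ sa, 0 ≤ μthprev sa)
    (μhh μhhprev : S × A → ℝ) (hμhh : ∀ sa, 0 < μhh sa) (hμhhprev : ∀ sa, 0 < μhhprev sa)
    (P : S × A → S → ℝ) (hP0 : ∀ sa s, 0 ≤ P sa s) (hP1 : ∀ sa, ∑ s, P sa s = 1)
    (π : S → A → ℝ) (hπ0 : ∀ s a, 0 ≤ π s a) (hπ1 : ∀ s, ∑ a, π s a = 1)
    (w wh : S × A → ℝ) (hw : ∀ sa, 0 ≤ w sa) (hwh : ∀ sa, 0 ≤ wh sa)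
    (Ω : Type) [MeasurableSpace Ω] (Pr : Measure Ω) [IsProbabilityMeasure Pr]
    (ξ : Ω → S × A) (ζ : Ω → S × A) (σ : Ω → S)
    (hξm : Measurable ξ) (hζm : Measurable ζ) (hσm : Measurable σ)
    (hξd : ∀ sa : S × A, Pr {ω | ξ ω = sa} = ENNReal.ofReal (μth sa))
    (hζσd : ∀ (sa : S × A) (s : S),
      Pr {ω | ζ ω = sa ∧ σ ω = s} = ENNReal.ofReal (μthprev sa * P sa s)) :
    ∫ ω, ∑ sa : S × A,
        (w sa / μhh sa * (if ξ ω = sa then (1 : ℝ) else 0) -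
          wh (ζ ω) / μhhprev (ζ ω) * π sa.1 sa.2 *
            (if σ ω = sa.1 then (1 : ℝ) else 0)) ^ 2 ∂Pr ≤
      ∑ sa : S × A, μth sa * (w sa / μhh sa) ^ 2 +
        ∑ sa : S × A, μthprev sa * (wh sa / μhhprev sa) ^ 2 := by
  set c : S × A → ℝ := fun sa => (w sa / μhh sa) ^ 2
  set h : S × A → ℝ := fun sa => (wh sa / μhhprev sa) ^ 2
  have hc_int := integrable_comp_of_fintype (μ := Pr) hξm c
  have hh_int := integrable_comp_of_fintype (μ := Pr) hζm h
  have integral_c : ∫ ω, c (ξ ω) ∂Pr = ∑ sa, μth sa * c sa := by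
    simp [integral_comp_eq_sum_measureReal hξm, measureReal_def, hξd, hμth0]
  have integral_h : ∫ ω, h (ζ ω) ∂Pr = ∑ sa, μthprev sa * h sa := by
    have := integral_comp_eq_sum_measureReal (μ := Pr) (hζm.prodMk hσm) fun p => h p.1
    simp [this, Fintype.sum_prod_type, measureReal_def, hζσd, hμthprev0, hP0,
      ← Finset.sum_mul, ← Finset.mul_sum, hP1]
  calc _ ≤ ∫ ω, c (ξ ω) + h (ζ ω) ∂Pr := by
        refine integral_mono_of_nonneg (.of_forall fun ω => by positivity) (hc_int.add hh_int)
          (.of_forall fun ω => ?_)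
        simpa only [mul_comm (wh _ / _)] using
          sum_sq_gradient_le (fun sa => div_nonneg (hw sa) (hμhh sa).le)
            (div_nonneg (hwh (ζ ω)) (hμhhprev (ζ ω)).le) hπ0 hπ1 (ξ ω) (σ ω)
    _ = _ := by rw [integral_add hc_int hh_int, integral_c, integral_h]

/-- Second-moment bound for the IDES stochastic gradient: with `(s_h,a_h) ∼ μ̃_h`,
independently `(s',a') ∼ μ̃_{h−1}` and `s'' ∼ P(·|s',a')`, the stochastic gradient
`g(s,a) = (w(s,a)/μ̂_h(s,a))·1[(s_h,a_h)=(s,a)]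
          − (ŵ(s',a')/μ̂_{h−1}(s',a'))·π(a|s)·1[s''=s]`
satisfies `E[Σ_{(s,a)} g(s,a)²] ≤ Σ μ̃_h·(w/μ̂_h)² + Σ μ̃_{h−1}·(ŵ/μ̂_{h−1})²`. -/
theorem stmt_17 (S A : Type) [Fintype S] [Fintype A] [Nonempty S] [Nonempty A]
    [DecidableEq S] [DecidableEq A]
    [MeasurableSpace S] [MeasurableSingletonClass S]
    [MeasurableSpace A] [MeasurableSingletonClass A]
    (μth μthprev : S × A → ℝ)
    (hμth0 : ∀ sa, 0 ≤ μth sa) (hμth1 : ∑ sa : S × A, μth sa = 1)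
    (hμthprev0 : ∀ sa, 0 ≤ μthprev sa) (hμthprev1 : ∑ sa : S × A, μthprev sa = 1)
    (μhh μhhprev : S × A → ℝ) (hμhh : ∀ sa, 0 < μhh sa) (hμhhprev : ∀ sa, 0 < μhhprev sa)
    (P : S × A → S → ℝ) (hP0 : ∀ sa s, 0 ≤ P sa s) (hP1 : ∀ sa, ∑ s, P sa s = 1)
    (π : S → A → ℝ) (hπ0 : ∀ s a, 0 ≤ π s a) (hπ1 : ∀ s, ∑ a, π s a = 1)
    (w wh : S × A → ℝ) (hw : ∀ sa, 0 ≤ w sa) (hwh : ∀ sa, 0 ≤ wh sa)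
    (Ω : Type) [MeasurableSpace Ω] (Pr : Measure Ω) [IsProbabilityMeasure Pr]
    (ξ : Ω → S × A) (ζ : Ω → S × A) (σ : Ω → S)
    (hξm : Measurable ξ) (hζm : Measurable ζ) (hσm : Measurable σ)
    (hξd : ∀ sa : S × A, Pr {ω | ξ ω = sa} = ENNReal.ofReal (μth sa))
    (hζσd : ∀ (sa : S × A) (s : S),
      Pr {ω | ζ ω = sa ∧ σ ω = s} = ENNReal.ofReal (μthprev sa * P sa s))
    (hindep : IndepFun ξ (fun ω => (ζ ω, σ ω)) Pr) :
    ∫ ω, ∑ sa : S × A,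
        (w sa / μhh sa * (if ξ ω = sa then (1 : ℝ) else 0) -
          wh (ζ ω) / μhhprev (ζ ω) * π sa.1 sa.2 *
            (if σ ω = sa.1 then (1 : ℝ) else 0)) ^ 2 ∂Pr ≤
      ∑ sa : S × A, μth sa * (w sa / μhh sa) ^ 2 +
        ∑ sa : S × A, μthprev sa * (wh sa / μhhprev sa) ^ 2 :=
  stmt_17_general S A μth μthprev hμth0 hμthprev0 μhh μhhprev hμhh hμhhprev P hP0 hP1 π hπ0 hπ1 w wh
    hw hwh Ω Pr ξ ζ σ hξm hζm hσm hξd hζσd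
end
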